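/- Let V(x) = max(1 - x, 0) be the hinge loss, σ ≥ 0, β > 0, and Z a standard normal random variable. Define φ(r) = E[V(r + σ√r · Z)] and h(r) = φ(r) + β r for r ≥ 0. If σ² < 4 and β < 1, then h admits a unique minimizer r⋆ on [0, ∞), and r⋆ > 0. -/

import Mathlib

/-!
For `σ > 0` and `r > 0` the objective has the closed form
`h r = (1 - r) Φ(a) + σ√r ϕ(a) + β r` with `a = (1 - r) / (σ√r)`, and the cancellation
`σ√r a = 1 - r` leaves `h' r = β - Φ(a) + σ ϕ(a) / (2√r)`. This slope is strictly increasing,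
since its derivative is `ϕ(a) ((1 + r)² - σ² r) / (4σ r^(5/2))` and `(1 + r)² ≥ 4r > σ² r`;
it tends to `β - 1 < 0` as `r → 0⁺` and is eventually positive because `Φ(a) → 0` as `r → ∞`.
So `h'` vanishes at a single `r⋆ > 0`, and `h`, which is continuous at `0`, strictly decreases
on `[0, r⋆]` and strictly increases on `[r⋆, ∞)`. For `σ = 0`, `h r = max (1 - r) 0 + β r` is
minimized exactly at `1`.
-/

open MeasureTheory ProbabilityTheory Real Set Filter Topology

local notation "ϕ" => gaussianPDFReal 0 1
local notation "Φ" => cdf (gaussianReal 0 1)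

lemma gaussianPDFReal_zero_one (x : ℝ) : ϕ x = (√(2 * π))⁻¹ * exp (-x ^ 2 / 2) := by
  simp [gaussianPDFReal_def]

lemma hasDerivAt_gaussianPDFReal_zero_one (x : ℝ) : HasDerivAt ϕ (-x * ϕ x) x := by
  have h : HasDerivAt (fun y : ℝ => -y ^ 2 / 2) (-x) x :=
    (((hasDerivAt_pow 2 x).fun_neg).div_const 2).congr_deriv (by norm_num; ring)
  rw [show ϕ = fun y => (√(2 * π))⁻¹ * exp (-y ^ 2 / 2) from funext gaussianPDFReal_zero_one]
  exact (h.exp.const_mul _).congr_deriv (by ring)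

lemma tendsto_rpow_abs_mul_gaussianPDFReal_zero_one (s : ℝ) :
    Tendsto (fun x => |x| ^ s * ϕ x) (cocompact ℝ) (𝓝 0) := by
  have := (tendsto_rpow_abs_mul_exp_neg_mul_sq_cocompact (a := 1 / 2) (by norm_num) s).const_mul
    (√(2 * π))⁻¹
  rw [mul_zero] at this
  refine this.congr fun x => ?_
  rw [gaussianPDFReal_zero_one, show -(1 / 2) * x ^ 2 = -x ^ 2 / 2 by ring]
  ring

lemma tendsto_gaussianPDFReal_zero_one_cocompact : Tendsto ϕ (cocompact ℝ) (𝓝 0) := by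
  simpa using tendsto_rpow_abs_mul_gaussianPDFReal_zero_one 0

lemma tendsto_mul_gaussianPDFReal_zero_one_atTop : Tendsto (fun x => x * ϕ x) atTop (𝓝 0) := by
  refine ((tendsto_rpow_abs_mul_gaussianPDFReal_zero_one 1).mono_left
    atTop_le_cocompact).congr' ?_
  filter_upwards [eventually_ge_atTop 0] with x hx
  rw [Real.rpow_one, abs_of_nonneg hx]

lemma integrable_mul_gaussianPDFReal_zero_one : Integrable (fun x => x * ϕ x) := by
  refine ((integrable_mul_exp_neg_mul_sq (b := 1 / 2) (by norm_num)).const_mul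
    (√(2 * π))⁻¹).congr (ae_of_all _ fun x => ?_)
  simp only [gaussianPDFReal_zero_one]
  ring_nf

lemma setIntegral_Iic_mul_gaussianPDFReal_zero_one (a : ℝ) :
    ∫ z in Iic a, z * ϕ z = -ϕ a := by
  rw [integral_Iic_of_hasDerivAt_of_tendsto' (f := fun z => -ϕ z) (m := 0)
    (fun x _ => by simpa using (hasDerivAt_gaussianPDFReal_zero_one x).fun_neg)
    integrable_mul_gaussianPDFReal_zero_one.integrableOn
    (by simpa using (tendsto_gaussianPDFReal_zero_one_cocompact.mono_left atBot_le_cocompact).neg),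
    sub_zero]

lemma continuous_gaussianPDFReal_zero_one : Continuous ϕ :=
  continuous_iff_continuousAt.2 fun x => (hasDerivAt_gaussianPDFReal_zero_one x).continuousAt

lemma cdf_gaussianReal_zero_one (x : ℝ) : Φ x = ∫ t in Iic x, ϕ t := by
  rw [cdf_eq_real, measureReal_def, gaussianReal_apply_eq_integral _ one_ne_zero,
    ENNReal.toReal_ofReal (setIntegral_nonneg measurableSet_Iic
      fun t _ => gaussianPDFReal_nonneg 0 1 t)]

lemma hasDerivAt_cdf_gaussianReal_zero_one (x : ℝ) : HasDerivAt Φ (ϕ x) x := by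
  have hint := integrable_gaussianPDFReal 0 1
  have hΦ : Φ = fun y => Φ 0 + ∫ t in (0 : ℝ)..y, ϕ t := by
    funext y
    rw [cdf_gaussianReal_zero_one, cdf_gaussianReal_zero_one,
      ← intervalIntegral.integral_Iic_sub_Iic hint.integrableOn hint.integrableOn]
    ring
  rw [hΦ]
  exact (intervalIntegral.integral_hasDerivAt_right hint.intervalIntegrable
    (continuous_gaussianPDFReal_zero_one.stronglyMeasurableAtFilter _ _)
    continuous_gaussianPDFReal_zero_one.continuousAt).const_add _

lemma integral_max_sub_mul_zero_gaussianReal (m : ℝ) {c : ℝ} (hc : 0 < c) :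
    ∫ z, max (m - c * z) 0 ∂gaussianReal 0 1 = m * Φ (m / c) + c * ϕ (m / c) := by
  have hind : ∀ z, ϕ z * max (m - c * z) 0 =
      (Iic (m / c)).indicator (fun z => m * ϕ z - c * (z * ϕ z)) z := by
    intro z
    rcases le_or_gt z (m / c) with hz | hz
    · rw [indicator_of_mem (mem_Iic.2 hz), max_eq_left (by linarith [(le_div_iff₀ hc).1 hz])]
      ring
    · rw [indicator_of_notMem (notMem_Iic.2 hz),
        max_eq_right (by linarith [(div_lt_iff₀ hc).1 hz]), mul_zero]
  have hint := integrable_gaussianPDFReal 0 1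
  simp_rw [integral_gaussianReal_eq_integral_smul one_ne_zero, smul_eq_mul, hind]
  rw [integral_indicator measurableSet_Iic,
    integral_sub (hint.const_mul m).integrableOn
      (integrable_mul_gaussianPDFReal_zero_one.const_mul c).integrableOn,
    integral_const_mul, integral_const_mul, setIntegral_Iic_mul_gaussianPDFReal_zero_one,
    cdf_gaussianReal_zero_one]
  ring

lemma tendsto_sqrt_nhdsGT_zero : Tendsto (√·) (𝓝[>] 0) (𝓝[>] 0) :=
  tendsto_nhdsWithin_iff.2 ⟨(continuous_sqrt.tendsto' 0 0 sqrt_zero).mono_left nhdsWithin_le_nhds,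
    eventually_nhdsWithin_of_forall fun _ hr => sqrt_pos.2 hr⟩

lemma hasDerivAt_sqrt_sq {s : ℝ} (hs : 0 < s) : HasDerivAt sqrt (1 / (2 * s)) (s ^ 2) := by
  simpa [sqrt_sq hs.le] using hasDerivAt_sqrt (pow_pos hs 2).ne'

lemma exists_strictAntiOn_Icc_strictMonoOn_Ici {f f' : ℝ → ℝ} {a : ℝ}
    (hfa : ContinuousWithinAt f (Ici a) a) (hf : ∀ x ∈ Ioi a, HasDerivAt f (f' x) x)
    (hf' : StrictMonoOn f' (Ioi a)) (hneg : ∀ᶠ x in 𝓝[>] a, f' x < 0)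
    (hpos : ∀ᶠ x in atTop, 0 < f' x) :
    ∃ c, a < c ∧ StrictAntiOn f (Icc a c) ∧ StrictMonoOn f (Ici c) := by
  obtain ⟨x₀, hx₀, hax₀⟩ := (hneg.and self_mem_nhdsWithin).exists
  obtain ⟨x₁, hx₁, hx₀₁⟩ := (hpos.and (eventually_gt_atTop x₀)).exists
  obtain ⟨c, hc, hfc⟩ := exists_hasDerivWithinAt_eq_of_gt_of_lt hx₀₁.le
    (fun x hx => (hf x (lt_of_lt_of_le hax₀ hx.1)).hasDerivWithinAt) hx₀ hx₁
  have hac : a < c := lt_trans hax₀ hc.1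
  have hcont : ContinuousOn f (Ici a) := by
    intro x hx
    rcases (mem_Ici.1 hx).eq_or_lt with rfl | hax
    · exact hfa
    · exact (hf x hax).continuousAt.continuousWithinAt
  refine ⟨c, hac, ?_, ?_⟩
  · refine strictAntiOn_of_deriv_neg (convex_Icc a c) (hcont.mono Icc_subset_Ici_self)
      fun x hx => ?_
    rw [interior_Icc] at hx
    rw [(hf x hx.1).deriv, ← hfc]
    exact hf' hx.1 hac hx.2
  · refine strictMonoOn_of_deriv_pos (convex_Ici c) (hcont.mono (Ici_subset_Ici.2 hac.le))
      fun x hx => ?_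
    rw [interior_Ici] at hx
    rw [(hf x (hac.trans hx)).deriv, ← hfc]
    exact hf' hac (hac.trans hx) hx

lemma StrictAntiOn.apply_lt_apply_of_strictMonoOn_Ici {α β : Type*} [LinearOrder α]
    [Preorder β] {f : α → β} {a c x : α} (hanti : StrictAntiOn f (Icc a c))
    (hmono : StrictMonoOn f (Ici c)) (hac : a ≤ c) (hax : a ≤ x) (hxc : x ≠ c) :
    f c < f x := by
  rcases hxc.lt_or_gt with hlt | hgt
  · exact hanti ⟨hax, hlt.le⟩ ⟨hac, le_rfl⟩ hlt
  · exact hmono self_mem_Ici hgt.le hgt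

noncomputable def hingeObjective (σ β r : ℝ) : ℝ :=
  (∫ z, max (1 - (r + σ * √r * z)) 0 ∂gaussianReal 0 1) + β * r

noncomputable def hingeThreshold (σ r : ℝ) : ℝ := (1 - r) / (σ * √r)

noncomputable def hingeSlope (σ β r : ℝ) : ℝ :=
  β - Φ (hingeThreshold σ r) + σ * ϕ (hingeThreshold σ r) / (2 * √r)

lemma hingeObjective_apply_zero (σ β : ℝ) : hingeObjective σ β 0 = 1 := by
  simp [hingeObjective]

lemma hingeObjective_zero_left (β r : ℝ) : hingeObjective 0 β r = max (1 - r) 0 + β * r := by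
  simp [hingeObjective]

lemma hingeObjective_eq_of_pos {σ r : ℝ} (β : ℝ) (hσ : 0 < σ) (hr : 0 < r) :
    hingeObjective σ β r = (1 - r) * Φ (hingeThreshold σ r)
      + σ * √r * ϕ (hingeThreshold σ r) + β * r := by
  simp_rw [hingeObjective, sub_add_eq_sub_sub,
    integral_max_sub_mul_zero_gaussianReal (1 - r) (by positivity : 0 < σ * √r)]
  rfl

lemma hingeThreshold_eq (σ r : ℝ) : hingeThreshold σ r = ((√r)⁻¹ - √r) / σ := by
  rcases le_or_gt r 0 with hr | hr
  · simp [hingeThreshold, sqrt_eq_zero'.2 hr]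
  · have := sqrt_pos.2 hr
    rw [hingeThreshold]
    field_simp
    rw [sq_sqrt hr.le]

lemma hingeThreshold_sq (σ : ℝ) {s : ℝ} (hs : 0 < s) :
    hingeThreshold σ (s ^ 2) = (1 - s ^ 2) / (σ * s) := by
  rw [hingeThreshold, sqrt_sq hs.le]

lemma hasDerivAt_hingeThreshold_sq {σ s : ℝ} (hσ : 0 < σ) (hs : 0 < s) :
    HasDerivAt (hingeThreshold σ) (-(1 + s ^ 2) / (2 * σ * s ^ 3)) (s ^ 2) := by
  have := ((hasDerivAt_id (s ^ 2)).const_sub 1).div ((hasDerivAt_sqrt_sq hs).const_mul σ)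
    (by rw [sqrt_sq hs.le]; positivity)
  refine this.congr_deriv ?_
  rw [id, sqrt_sq hs.le]
  field_simp
  ring

lemma hasDerivAt_hingeObjective {σ r : ℝ} (β : ℝ) (hσ : 0 < σ) (hr : 0 < r) :
    HasDerivAt (hingeObjective σ β) (hingeSlope σ β r) r := by
  obtain ⟨s, hs, rfl⟩ : ∃ s, 0 < s ∧ s ^ 2 = r := ⟨√r, sqrt_pos.2 hr, sq_sqrt hr.le⟩
  have ha := hasDerivAt_hingeThreshold_sq hσ hs
  have hclosed := ((((hasDerivAt_id _).const_sub 1).mul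
      ((hasDerivAt_cdf_gaussianReal_zero_one _).comp _ ha)).add
    (((hasDerivAt_sqrt_sq hs).const_mul σ).mul ((hasDerivAt_gaussianPDFReal_zero_one _).comp _ ha))).add
    ((hasDerivAt_id _).const_mul β)
  refine (hclosed.congr_of_eventuallyEq ?_).congr_deriv ?_
  · filter_upwards [lt_mem_nhds hr] with x hx using hingeObjective_eq_of_pos β hσ hx
  · simp only [hingeSlope, Function.comp_apply, id, sqrt_sq hs.le]
    rw [hingeThreshold_sq σ hs]
    field_simp
    ring

lemma hasDerivAt_hingeSlope {σ r : ℝ} (β : ℝ) (hσ : 0 < σ) (hr : 0 < r) :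
    HasDerivAt (hingeSlope σ β)
      (ϕ (hingeThreshold σ r) * ((1 + r) ^ 2 - σ ^ 2 * r) / (4 * σ * r ^ 2 * √r)) r := by
  obtain ⟨s, hs, rfl⟩ : ∃ s, 0 < s ∧ s ^ 2 = r := ⟨√r, sqrt_pos.2 hr, sq_sqrt hr.le⟩
  have ha := hasDerivAt_hingeThreshold_sq hσ hs
  have hslope := (((hasDerivAt_cdf_gaussianReal_zero_one _).comp _ ha).const_sub β).add
    ((((hasDerivAt_gaussianPDFReal_zero_one _).comp _ ha).const_mul σ).div ((hasDerivAt_sqrt_sq hs).const_mul 2)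
      (by rw [sqrt_sq hs.le]; positivity))
  refine hslope.congr_deriv ?_
  simp only [Function.comp_apply, sqrt_sq hs.le]
  rw [hingeThreshold_sq σ hs]
  field_simp
  ring

lemma strictMonoOn_hingeSlope {σ : ℝ} (β : ℝ) (hσ : 0 < σ) (hσ2 : σ ^ 2 < 4) :
    StrictMonoOn (hingeSlope σ β) (Ioi 0) := by
  refine strictMonoOn_of_deriv_pos (convex_Ioi 0)
    (fun r hr => (hasDerivAt_hingeSlope β hσ hr).continuousAt.continuousWithinAt)
    fun r hr => ?_
  rw [interior_Ioi] at hr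
  have hr : 0 < r := hr
  rw [(hasDerivAt_hingeSlope β hσ hr).deriv]
  have := gaussianPDFReal_pos 0 1 (hingeThreshold σ r) one_ne_zero
  have : 0 < (1 + r) ^ 2 - σ ^ 2 * r := by nlinarith [sq_nonneg (1 - r)]
  positivity

lemma tendsto_hingeThreshold_nhdsGT_zero {σ : ℝ} (hσ : 0 < σ) :
    Tendsto (hingeThreshold σ) (𝓝[>] 0) atTop := by
  simp_rw [funext (hingeThreshold_eq σ), sub_eq_add_neg]
  exact ((tendsto_inv_nhdsGT_zero.comp tendsto_sqrt_nhdsGT_zero).atTop_add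
    (tendsto_sqrt_nhdsGT_zero.mono_right nhdsWithin_le_nhds).neg).atTop_div_const hσ

lemma tendsto_hingeThreshold_atTop {σ : ℝ} (hσ : 0 < σ) :
    Tendsto (hingeThreshold σ) atTop atBot := by
  simp_rw [funext (hingeThreshold_eq σ), sub_eq_add_neg]
  exact ((tendsto_inv_atTop_zero.comp tendsto_sqrt_atTop).add_atBot
    (tendsto_neg_atTop_atBot.comp tendsto_sqrt_atTop)).atBot_div_const hσ

lemma tendsto_hingeSlope_nhdsGT_zero {σ : ℝ} (β : ℝ) (hσ : 0 < σ) :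
    Tendsto (hingeSlope σ β) (𝓝[>] 0) (𝓝 (β - 1)) := by
  have ha := tendsto_hingeThreshold_nhdsGT_zero hσ
  have hid : Tendsto (fun r : ℝ => r) (𝓝[>] 0) (𝓝 0) := nhdsWithin_le_nhds
  -- `σ / (2√r) = σ² a / (2 (1 - r))` turns the blow-up of `1 / √r` into `a ϕ(a) → 0`.
  have hlim : Tendsto (fun r => β - Φ (hingeThreshold σ r)
      + σ ^ 2 * (hingeThreshold σ r * ϕ (hingeThreshold σ r)) / (2 * (1 - r)))
      (𝓝[>] 0) (𝓝 (β - 1 + σ ^ 2 * 0 / (2 * (1 - 0)))) :=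
    (tendsto_const_nhds.sub ((tendsto_cdf_atTop _).comp ha)).add
      (((tendsto_mul_gaussianPDFReal_zero_one_atTop.comp ha).const_mul (σ ^ 2)).div
        (tendsto_const_nhds.mul (tendsto_const_nhds.sub hid)) (by norm_num))
  rw [mul_zero, zero_div, add_zero] at hlim
  refine hlim.congr' ?_
  filter_upwards [Ioo_mem_nhdsGT (zero_lt_one' ℝ)] with r hr
  have := sqrt_pos.2 hr.1
  have := sub_pos.2 hr.2
  rw [hingeSlope, hingeThreshold]
  field_simp

lemma eventually_hingeSlope_pos_atTop {σ β : ℝ} (hσ : 0 < σ) (hβ : 0 < β) :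
    ∀ᶠ r in atTop, 0 < hingeSlope σ β r := by
  filter_upwards [((tendsto_cdf_atBot _).comp (tendsto_hingeThreshold_atTop hσ)).eventually
    (gt_mem_nhds hβ)] with r hr
  have := gaussianPDFReal_nonneg 0 1 (hingeThreshold σ r)
  have : 0 ≤ σ * ϕ (hingeThreshold σ r) / (2 * √r) := by positivity
  rw [hingeSlope]
  linarith [show Φ (hingeThreshold σ r) < β from hr]

lemma continuousWithinAt_hingeObjective_zero {σ : ℝ} (β : ℝ) (hσ : 0 < σ) :
    ContinuousWithinAt (hingeObjective σ β) (Ici 0) 0 := by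
  rw [← continuousWithinAt_Ioi_iff_Ici, ContinuousWithinAt, hingeObjective_apply_zero]
  have ha := tendsto_hingeThreshold_nhdsGT_zero hσ
  have hid : Tendsto (fun r : ℝ => r) (𝓝[>] 0) (𝓝 0) := nhdsWithin_le_nhds
  have hlim : Tendsto (fun r => (1 - r) * Φ (hingeThreshold σ r)
      + σ * √r * ϕ (hingeThreshold σ r) + β * r) (𝓝[>] 0) (𝓝 ((1 - 0) * 1 + σ * 0 * 0 + β * 0)) :=
    (((tendsto_const_nhds.sub hid).mul ((tendsto_cdf_atTop _).comp ha)).add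
    ((tendsto_const_nhds.mul (tendsto_sqrt_nhdsGT_zero.mono_right nhdsWithin_le_nhds)).mul
      ((tendsto_gaussianPDFReal_zero_one_cocompact.mono_left atTop_le_cocompact).comp ha))).add
    (tendsto_const_nhds.mul hid)
  simp only [sub_zero, mul_one, mul_zero, add_zero] at hlim
  refine hlim.congr' ?_
  filter_upwards [self_mem_nhdsWithin] with r hr
  exact (hingeObjective_eq_of_pos β hσ hr).symm

lemma exists_strictAntiOn_strictMonoOn_hingeObjective {σ β : ℝ} (hσ : 0 ≤ σ) (hσ2 : σ ^ 2 < 4)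
    (hβ0 : 0 < β) (hβ1 : β < 1) :
    ∃ c, 0 < c ∧ StrictAntiOn (hingeObjective σ β) (Icc 0 c) ∧
      StrictMonoOn (hingeObjective σ β) (Ici c) := by
  rcases hσ.eq_or_lt with rfl | hσ
  · refine ⟨1, one_pos, fun x hx y hy hxy => ?_, fun x hx y hy hxy => ?_⟩
    · simp only [hingeObjective_zero_left, max_eq_left (sub_nonneg.2 hx.2),
        max_eq_left (sub_nonneg.2 hy.2)]
      nlinarith
    · simp only [hingeObjective_zero_left, max_eq_right (sub_nonpos.2 (mem_Ici.1 hx)),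
        max_eq_right (sub_nonpos.2 (mem_Ici.1 hy))]
      nlinarith
  · exact exists_strictAntiOn_Icc_strictMonoOn_Ici (continuousWithinAt_hingeObjective_zero β hσ)
      (fun r hr => hasDerivAt_hingeObjective β hσ hr) (strictMonoOn_hingeSlope β hσ hσ2)
      ((tendsto_hingeSlope_nhdsGT_zero β hσ).eventually (gt_mem_nhds (by linarith)))
      (eventually_hingeSlope_pos_atTop hσ hβ0)

theorem stmt1 (σ β : ℝ) (hσ : 0 ≤ σ) (hσ2 : σ ^ 2 < 4) (hβ0 : 0 < β) (hβ1 : β < 1)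
    (h : ℝ → ℝ)
    (hh : ∀ r, 0 ≤ r → h r =
      (∫ z, max (1 - (r + σ * Real.sqrt r * z)) 0 ∂(gaussianReal 0 1)) + β * r) :
    ∃ rs : ℝ, 0 < rs ∧ (∀ r, 0 ≤ r → h rs ≤ h r) ∧
      ∀ r, 0 ≤ r → (∀ r', 0 ≤ r' → h r ≤ h r') → r = rs := by
  obtain ⟨c, hc, hanti, hmono⟩ :=
    exists_strictAntiOn_strictMonoOn_hingeObjective hσ hσ2 hβ0 hβ1
  have hlt : ∀ r, 0 ≤ r → r ≠ c → h c < h r := fun r hr hrc => by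
    rw [hh c hc.le, hh r hr]
    exact hanti.apply_lt_apply_of_strictMonoOn_Ici hmono hc.le hr hrc
  refine ⟨c, hc, fun r hr => ?_, fun r hr hmin => ?_⟩
  · rcases eq_or_ne r c with rfl | hrc
    · exact le_rfl
    · exact (hlt r hr hrc).le
  · by_contra hrc
    exact (hmin c hc.le).not_gt (hlt r hr hrc)
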